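/- arXiv:1004.4835 — 2 statements merged into one kernel-verified Lean document; each statement's English description precedes it below -/
import Mathlib

section
/- In the Galois setup, let σ′, τ′ ∈ Stab(T) be such that the pullback pairs p^*σ′ and p^*τ′ are locally finite stability conditions on T_L. Then d(p^*σ′, p^*τ′) ≤ d(σ′, τ′) in [0,∞]. -/
open CategoryTheory Limits Pretriangulated ENNReal

noncomputable section

namespace StabilityPaper

universe v u v₂ u₂ v₃ u₃

/-- The data of a "prestability condition": a central charge, given as a function on
objects (which, when required to be additive on distinguished triangles, is the same
as a group homomorphism `K(T) → ℂ` on the Grothendieck group), and a collection of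
sets of objects `P φ` for `φ ∈ ℝ`. -/
structure PreStab (C : Type u) where
  Z : C → ℂ
  P : ℝ → Set C

section Triangulated

variable {C : Type u} [Category.{v} C] [Preadditive C] [HasZeroObject C] [HasShift C ℤ]
  [∀ n : ℤ, (shiftFunctor C n).Additive] [Pretriangulated C] [HasFiniteBiproducts C]

/-- A Harder–Narasimhan filtration of `E` with respect to the collection of
subcategories `P`: distinguished triangles `E_{i-1} → E_i → A_i` with `E_0 = 0`,
`E_n ≅ E`, `A_i` a nonzero object of `P (φ i)` and strictly decreasing phases `φ`. -/
structure HNFiltration (P : ℝ → Set C) (E : C) where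
  n : ℕ
  npos : 0 < n
  Fil : Fin (n + 1) → C
  A : Fin n → C
  phi : Fin n → ℝ
  fil_zero : IsZero (Fil 0)
  fil_last : Nonempty (Fil (Fin.last n) ≅ E)
  A_mem : ∀ i, A i ∈ P (phi i)
  A_ne : ∀ i, ¬ IsZero (A i)
  phi_anti : StrictAnti phi
  tri : ∀ i : Fin n, ∃ (f : Fil i.castSucc ⟶ Fil i.succ) (g : Fil i.succ ⟶ A i)
    (h : A i ⟶ (Fil i.castSucc)⟦(1 : ℤ)⟧), Triangle.mk f g h ∈ distTriang C

/-- The condition that the subcategories `P φ` are strictly full additive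
subcategories. -/
structure IsSlicing (P : ℝ → Set C) : Prop where
  iso_mem : ∀ (φ : ℝ) (X Y : C), Nonempty (X ≅ Y) → X ∈ P φ → Y ∈ P φ
  zero_mem : ∀ (φ : ℝ) (X : C), IsZero X → X ∈ P φ
  sum_mem : ∀ (φ : ℝ) (X Y : C), X ∈ P φ → Y ∈ P φ → (X ⊞ Y) ∈ P φ

/-- The axioms (SC1)-(SC4) of a stability condition on a triangulated category,
together with the requirements that the `P φ` are strictly full additive subcategories
and that `Z` is additive on distinguished triangles (i.e. descends to a group
homomorphism on the Grothendieck group). -/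
structure IsStabCond (σ : PreStab C) : Prop where
  slicing : IsSlicing σ.P
  zadd : ∀ T ∈ distTriang C, σ.Z T.obj₂ = σ.Z T.obj₁ + σ.Z T.obj₃
  sc1 : ∀ (φ : ℝ) (E : C), E ∈ σ.P φ → ¬ IsZero E →
    ∃ m : ℝ, 0 < m ∧ σ.Z E = (m : ℂ) * Complex.exp ((Real.pi : ℂ) * φ * Complex.I)
  sc2 : ∀ (φ : ℝ) (E : C), (E⟦(1 : ℤ)⟧ ∈ σ.P (φ + 1)) ↔ E ∈ σ.P φ
  sc3 : ∀ (φ₁ φ₂ : ℝ), φ₂ < φ₁ → ∀ E₁ ∈ σ.P φ₁, ∀ E₂ ∈ σ.P φ₂, ∀ f : E₁ ⟶ E₂, f = 0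
  sc4 : ∀ E : C, ¬ IsZero E → Nonempty (HNFiltration σ.P E)

/-- The extension-closed subcategory generated by a set of objects. -/
inductive extClosure (S : Set C) : C → Prop
  | of {X : C} : X ∈ S → extClosure S X
  | zero {X : C} : IsZero X → extClosure S X
  | iso {X Y : C} : (X ≅ Y) → extClosure S X → extClosure S Y
  | ext (T : Triangle C) (hT : T ∈ distTriang C) (h₁ : extClosure S T.obj₁)
      (h₃ : extClosure S T.obj₃) : extClosure S T.obj₂

/-- `A` is a strict subobject of `B` inside the subcategory `𝒜`: there is a
distinguished triangle `A → B → Q` with `Q` a nonzero object of `𝒜`. -/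
def StrictSubIn (𝒜 : Set C) (A B : C) : Prop :=
  A ∈ 𝒜 ∧ B ∈ 𝒜 ∧ ∃ (f : A ⟶ B) (Q : C) (g : B ⟶ Q) (h : Q ⟶ A⟦(1 : ℤ)⟧),
    Q ∈ 𝒜 ∧ ¬ IsZero Q ∧ Triangle.mk f g h ∈ distTriang C

/-- `B` is a strict quotient of `A` inside the subcategory `𝒜`: there is a
distinguished triangle `K → A → B` with `K` a nonzero object of `𝒜`. -/
def StrictQuotIn (𝒜 : Set C) (A B : C) : Prop :=
  A ∈ 𝒜 ∧ B ∈ 𝒜 ∧ ∃ (K : C) (f : K ⟶ A) (g : A ⟶ B) (h : B ⟶ K⟦(1 : ℤ)⟧),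
    K ∈ 𝒜 ∧ ¬ IsZero K ∧ Triangle.mk f g h ∈ distTriang C

/-- A subcategory is of finite length if it is Artinian (no infinite chains of strict
subobjects) and Noetherian (no infinite chains of strict quotients). -/
def FiniteLengthIn (𝒜 : Set C) : Prop :=
  (¬ ∃ c : ℕ → C, ∀ n, StrictSubIn 𝒜 (c (n + 1)) (c n)) ∧
  (¬ ∃ c : ℕ → C, ∀ n, StrictQuotIn 𝒜 (c n) (c (n + 1)))

/-- Local finiteness of a prestability condition. -/
def LocallyFinite (σ : PreStab C) : Prop :=
  ∃ ε : ℝ, 0 < ε ∧ ∀ φ : ℝ,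
    FiniteLengthIn (setOf (extClosure (⋃ ψ ∈ Set.Ioo (φ - ε) (φ + ε), σ.P ψ)))

/-- A locally finite stability condition. -/
def IsStabilityCondition (σ : PreStab C) : Prop :=
  IsStabCond σ ∧ LocallyFinite σ

variable (C) in
/-- The set of locally finite stability conditions on `C`. -/
abbrev Stab := {σ : PreStab C // IsStabilityCondition σ}

/-- The largest phase `φ⁺(E)` appearing in a Harder–Narasimhan filtration of `E`
(well defined, by uniqueness of Harder–Narasimhan filtrations, for a stability
condition; here defined as a supremum over all HN filtrations). -/
def phiPlus (σ : PreStab C) (E : C) : ℝ :=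
  sSup {x | ∃ h : HNFiltration σ.P E, x = h.phi ⟨0, h.npos⟩}

/-- The smallest phase `φ⁻(E)` appearing in a Harder–Narasimhan filtration of `E`. -/
def phiMinus (σ : PreStab C) (E : C) : ℝ :=
  sSup {x | ∃ h : HNFiltration σ.P E, x = h.phi ⟨h.n - 1, Nat.sub_lt h.npos one_pos⟩}

/-- The mass `m_σ(E) = ∑ |Z(A_i)|` of an object. -/
def mass (σ : PreStab C) (E : C) : ℝ :=
  sSup {x | ∃ h : HNFiltration σ.P E, x = ∑ i, ‖σ.Z (h.A i)‖}

/-- Bridgeland's generalized metric on the space of stability conditions, with values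
in `[0, ∞]`. -/
def stabDist (σ τ : PreStab C) : ℝ≥0∞ :=
  ⨆ E : {E : C // ¬ IsZero E},
    ENNReal.ofReal (max |phiMinus σ E.1 - phiMinus τ E.1|
      (max |phiPlus σ E.1 - phiPlus τ E.1| |Real.log (mass σ E.1 / mass τ E.1)|))

/-- The topology induced by the generalized metric: the topology generated by
open balls. -/
instance : TopologicalSpace (Stab C) :=
  TopologicalSpace.generateFrom
    {U | ∃ (σ : Stab C) (r : ℝ≥0∞), U = {τ : Stab C | stabDist σ.1 τ.1 < r}}

end Triangulated

section Functoriality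

variable {C : Type u} [Category.{v} C] {D : Type u₂} [Category.{v₂} D]

/-- Given a functor `p : C ⥤ D` and a prestability condition `σ` on `D`, the
"pushforward" prestability condition on `C`: its central charge is `Z ∘ K(p)` and its
slicing is `P' φ = {E | p(E) ∈ P φ}`.  (When `p = p^* : D^b(X) → D^b(X_L)`, this is the
pushforward `p_* σ` of a stability condition on `X_L`; when `p = p_* : D^b(X_L) → D^b(X)`,
this is the pullback `p^* σ` of a stability condition on `X`.) -/
def pushforward (p : C ⥤ D) (σ : PreStab D) : PreStab C where
  Z E := σ.Z (p.obj E)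
  P φ := {E | p.obj E ∈ σ.P φ}

end Functoriality

section GroupAction

variable {C : Type u} [Category.{v} C] {G : Type} [Group G]

/-- The action of a group element `g` on prestability conditions:
`g • (Z, P) = (Z ∘ K(g_*), g^* P)`, where `g_* = (g⁻¹)^*` and `(g^* P)(φ)` is the
strictly full image of `P φ` under `g^*`. -/
def gAct (gst : G → C ⥤ C) (g : G) (σ : PreStab C) : PreStab C where
  Z E := σ.Z ((gst g⁻¹).obj E)
  P φ := {E | ∃ X ∈ σ.P φ, Nonempty ((gst g).obj X ≅ E)}

/-- The cocycle condition for a `G`-linearization `lam` of an object `X`. -/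
def CocycleLin (gst : G → C ⥤ C) (actMul : ∀ g h : G, gst h ⋙ gst g ≅ gst (g * h))
    (X : C) (lam : ∀ g : G, X ≅ (gst g).obj X) : Prop :=
  ∀ g h : G, (lam (g * h)).hom =
    (lam g).hom ≫ (gst g).map ((lam h).hom) ≫ (actMul g h).hom.app X

/-- Compatibility of a morphism with `G`-linearizations of its source and target. -/
def LinHomCompat (gst : G → C ⥤ C) {X Y : C}
    (lamX : ∀ g : G, X ≅ (gst g).obj X) (lamY : ∀ g : G, Y ≅ (gst g).obj Y)
    (f : X ⟶ Y) : Prop :=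
  ∀ g : G, f ≫ (lamY g).hom = (lamX g).hom ≫ (gst g).map f

/-- A function on objects which is additive on distinguished triangles; this is the
same as a group homomorphism on the Grothendieck group. -/
def AdditiveOnTriangles {C : Type u₂} [Category.{v₂} C] [Preadditive C] [HasZeroObject C]
    [HasShift C ℤ] [∀ n : ℤ, (shiftFunctor C n).Additive] [Pretriangulated C]
    (U : C → ℂ) : Prop :=
  ∀ T ∈ distTriang C, U T.obj₂ = U T.obj₁ + U T.obj₃

/-- Bridgeland's generalized norm `‖U‖_σ` on central charges, with values in `[0,∞]`:
the supremum over nonzero `σ`-semistable objects `E` of `|U(E)|/|Z(E)|`. -/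
noncomputable def stabNorm (σ : PreStab C) (U : C → ℂ) : ℝ≥0∞ :=
  ⨆ E : {E : C // ¬ IsZero E ∧ ∃ φ : ℝ, E ∈ σ.P φ},
    ENNReal.ofReal (‖U E.1‖ / ‖σ.Z E.1‖)

end GroupAction

section Descent

variable {C₁ : Type u} [Category.{v} C₁] {C₂ : Type u₂} [Category.{v₂} C₂]
  {G : Type} [Group G]

/-- The Galois descent hypothesis: the natural functor from `T` to the category of
`G`-linearized objects of `T_L`, sending `E` to `p^* E` with its canonical
linearization, is an equivalence of categories.  This is expressed by saying that it
is fully faithful (morphisms compatible with the linearizations descend uniquely) and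
essentially surjective (every `G`-linearized object is isomorphic, compatibly with the
linearizations, to some `p^* E` with its canonical linearization). -/
def GaloisDescent (pstar : C₁ ⥤ C₂) (gst : G → C₂ ⥤ C₂)
    (actMul : ∀ g h : G, gst h ⋙ gst g ≅ gst (g * h))
    (pIso : ∀ g : G, pstar ≅ pstar ⋙ gst g) : Prop :=
  (∀ (E F : C₁) (f' : pstar.obj E ⟶ pstar.obj F),
      LinHomCompat gst (fun g => (pIso g).app E) (fun g => (pIso g).app F) f' →
      ∃! f : E ⟶ F, pstar.map f = f') ∧
  (∀ (X : C₂) (lam : ∀ g : G, X ≅ (gst g).obj X), CocycleLin gst actMul X lam →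
      ∃ (E : C₁) (u : pstar.obj E ≅ X),
        LinHomCompat gst (fun g => (pIso g).app E) lam u.hom)

end Descent

/-!
The functor `p_*` is triangulated and reflects zero objects, since `p^* p_* X` contains `X` as
its summand for `g = 1`. So it carries a Harder–Narasimhan filtration of `E` with respect to
`p^*σ'` to one of `p_* E` with respect to `σ'`, with the same phases and the same masses.
For a stability condition the extreme phases and the mass do not depend on the choice of
Harder–Narasimhan filtration (the last factor and the penultimate step are unique up to
isomorphism, and one inducts on the length), hence `φ^±_{p^*σ'}(E) = φ^±_{σ'}(p_* E)` and
`m_{p^*σ'}(E) = m_{σ'}(p_* E)`. Every term of the supremum defining `d(p^*σ', p^*τ')` is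
therefore a term of the one defining `d(σ', τ')`.
-/

lemma csSup_eq_of_subset_of_subsingleton {S T : Set ℝ} (hST : S ⊆ T) (hS : S.Nonempty)
    (hT : T.Subsingleton) : sSup S = sSup T := by
  obtain ⟨v, hv⟩ := hS
  rw [hT.eq_singleton_of_mem (hST hv), (hT.anti hST).eq_singleton_of_mem hv]

lemma sum_fin_eq_sum_fin_pred_add {M : Type*} [AddCommMonoid M] {n : ℕ} (hn : 0 < n)
    (g : Fin n → M) :
    ∑ i, g i = ∑ i : Fin (n - 1), g ⟨i, by omega⟩ + g ⟨n - 1, by omega⟩ := by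
  obtain ⟨m, rfl⟩ : ∃ m, n = m + 1 := ⟨n - 1, by omega⟩
  exact Fin.sum_univ_castSucc g

section Triangulated

open ZeroObject

variable {C : Type u} [Category.{v} C] [Preadditive C] [HasZeroObject C] [HasShift C ℤ]
  [∀ n : ℤ, (shiftFunctor C n).Additive] [Pretriangulated C]

lemma AdditiveOnTriangles.eq_zero_of_isZero {U : C → ℂ} (hU : AdditiveOnTriangles U) {X : C}
    (hX : IsZero X) : U X = 0 := by
  have hT : Triangle.mk (𝟙 X) (0 : X ⟶ X) 0 ∈ distTriang C :=
    (Triangle.distinguished_iff_of_isZero₃ _ hX).2 (inferInstanceAs (IsIso (𝟙 X)))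
  simpa using hU _ hT

lemma AdditiveOnTriangles.congr_iso {U : C → ℂ} (hU : AdditiveOnTriangles U) {X Y : C}
    (e : X ≅ Y) : U X = U Y := by
  have hT : Triangle.mk e.hom (0 : Y ⟶ 0) 0 ∈ distTriang C :=
    (Triangle.distinguished_iff_of_isZero₃ _ (isZero_zero C)).2 (inferInstanceAs (IsIso e.hom))
  simpa [hU.eq_zero_of_isZero (isZero_zero C)] using (hU _ hT).symm

lemma Triangle.hom_obj₂_eq_zero {T : Triangle C} (hT : T ∈ distTriang C) {X : C}
    (h₁ : ∀ u : T.obj₁ ⟶ X, u = 0) (h₃ : ∀ u : T.obj₃ ⟶ X, u = 0) (u : T.obj₂ ⟶ X) :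
    u = 0 := by
  obtain ⟨v, rfl⟩ := Triangle.yoneda_exact₂ T hT u (h₁ _)
  rw [h₃ v, comp_zero]

end Triangulated

namespace HNFiltration

section Filtration

variable {C : Type u} [Category.{v} C] [Preadditive C] [HasZeroObject C] [HasShift C ℤ]
  [∀ n : ℤ, (shiftFunctor C n).Additive] [Pretriangulated C]
  {P : ℝ → Set C} {E : C}

def mor₁ (h : HNFiltration P E) (i : Fin h.n) : h.Fil i.castSucc ⟶ h.Fil i.succ :=
  (h.tri i).choose

def mor₂ (h : HNFiltration P E) (i : Fin h.n) : h.Fil i.succ ⟶ h.A i :=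
  (h.tri i).choose_spec.choose

def mor₃ (h : HNFiltration P E) (i : Fin h.n) : h.A i ⟶ (h.Fil i.castSucc)⟦(1 : ℤ)⟧ :=
  (h.tri i).choose_spec.choose_spec.choose

lemma triangle_distinguished (h : HNFiltration P E) (i : Fin h.n) :
    Triangle.mk (h.mor₁ i) (h.mor₂ i) (h.mor₃ i) ∈ distTriang C :=
  (h.tri i).choose_spec.choose_spec.choose_spec

lemma fil_induction (h : HNFiltration P E) (Q : C → Prop) (hzero : ∀ Y, IsZero Y → Q Y)
    (hext : ∀ T ∈ distTriang C, Q T.obj₁ → Q T.obj₃ → Q T.obj₂) (j : Fin (h.n + 1))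
    (hA : ∀ i : Fin h.n, i.castSucc < j → Q (h.A i)) : Q (h.Fil j) := by
  induction j using Fin.induction with
  | zero => exact hzero _ h.fil_zero
  | succ i ih =>
    exact hext _ (h.triangle_distinguished i)
      (ih fun k hk => hA k (hk.trans Fin.castSucc_lt_succ))
      (hA i Fin.castSucc_lt_succ)

/-- `phiMinus` reads off the phase at this index. -/
def lastIdx (h : HNFiltration P E) : Fin h.n := ⟨h.n - 1, Nat.sub_lt h.npos one_pos⟩

lemma lastIdx_succ (h : HNFiltration P E) : h.lastIdx.succ = Fin.last h.n := by
  have := h.npos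
  ext
  simp only [lastIdx, Fin.val_succ, Fin.val_last]
  omega

lemma phi_lastIdx_le (h : HNFiltration P E) (i : Fin h.n) : h.phi h.lastIdx ≤ h.phi i :=
  h.phi_anti.antitone (Fin.le_def.2 (by simp only [lastIdx]; omega))

def topIso (h : HNFiltration P E) : h.Fil h.lastIdx.succ ≅ E :=
  eqToIso (congrArg h.Fil h.lastIdx_succ) ≪≫ h.fil_last.some

def restrict (h : HNFiltration P E) (hn : 2 ≤ h.n) :
    HNFiltration P (h.Fil h.lastIdx.castSucc) where
  n := h.n - 1
  npos := by omega
  Fil i := h.Fil ⟨i, by omega⟩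
  A i := h.A ⟨i, by omega⟩
  phi i := h.phi ⟨i, by omega⟩
  fil_zero := h.fil_zero
  fil_last := ⟨Iso.refl _⟩
  A_mem i := h.A_mem _
  A_ne i := h.A_ne _
  phi_anti _ _ hab := h.phi_anti hab
  tri i := h.tri ⟨i, by omega⟩

def changeTarget (h : HNFiltration P E) {E' : C} (e : E ≅ E') : HNFiltration P E' :=
  { h with fil_last := ⟨h.fil_last.some ≪≫ e⟩ }

lemma zero_eq_lastIdx_of_n_eq_one (h : HNFiltration P E) (hn : h.n = 1) :
    (⟨0, h.npos⟩ : Fin h.n) = h.lastIdx := by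
  ext
  simp only [lastIdx]
  omega

lemma sum_A_eq_of_n_eq_one (h : HNFiltration P E) (hn : h.n = 1) (f : C → ℝ) :
    ∑ i, f (h.A i) = f (h.A h.lastIdx) :=
  Fintype.sum_eq_single _ fun i hi =>
    absurd (Fin.ext (by have := i.2; simp only [lastIdx]; omega)) hi

lemma sum_A_eq_add_lastIdx (h : HNFiltration P E) (hn : 2 ≤ h.n) (f : C → ℝ) :
    ∑ i, f (h.A i) = ∑ i, f ((h.restrict hn).A i) + f (h.A h.lastIdx) :=
  sum_fin_eq_sum_fin_pred_add h.npos (f ∘ h.A)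

end Filtration

section Stability

variable {C : Type u} [Category.{v} C] [Preadditive C] [HasZeroObject C] [HasShift C ℤ]
  [∀ n : ℤ, (shiftFunctor C n).Additive] [Pretriangulated C] {σ : PreStab C} {E : C}

lemma fil_hom_eq_zero (hs : IsStabCond σ) (h : HNFiltration σ.P E) {X : C} {ψ : ℝ}
    (hX : X ∈ σ.P ψ) (j : Fin (h.n + 1)) (hψ : ∀ i : Fin h.n, i.castSucc < j → ψ < h.phi i)
    (u : h.Fil j ⟶ X) : u = 0 :=
  h.fil_induction (fun Y => ∀ u : Y ⟶ X, u = 0) (fun _ hY u => hY.eq_of_src u 0)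
    (fun _ hT => Triangle.hom_obj₂_eq_zero hT) j
    (fun i hi u => hs.sc3 _ _ (hψ i hi) _ (h.A_mem i) _ hX u) u

lemma shift_fil_hom_eq_zero (hs : IsStabCond σ) (h : HNFiltration σ.P E) {X : C} {ψ : ℝ}
    (hX : X ∈ σ.P ψ) (j : Fin (h.n + 1)) (hψ : ∀ i : Fin h.n, i.castSucc < j → ψ < h.phi i + 1)
    (u : (h.Fil j)⟦(1 : ℤ)⟧ ⟶ X) : u = 0 :=
  h.fil_induction (fun Y => ∀ u : Y⟦(1 : ℤ)⟧ ⟶ X, u = 0)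
    (fun _ hY u => ((shiftFunctor C (1 : ℤ)).map_isZero hY).eq_of_src u 0)
    (fun T hT => Triangle.hom_obj₂_eq_zero (Triangle.shift_distinguished T hT 1)) j
    (fun i hi u => hs.sc3 _ _ (hψ i hi) _ ((hs.sc2 _ _).2 (h.A_mem i)) _ hX u) u

lemma mor₂_lastIdx_cancel (hs : IsStabCond σ) (h : HNFiltration σ.P E) {X : C}
    (hX : X ∈ σ.P (h.phi h.lastIdx)) {t t' : h.A h.lastIdx ⟶ X}
    (htt : h.mor₂ h.lastIdx ≫ t = h.mor₂ h.lastIdx ≫ t') : t = t' := by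
  have h0 : h.mor₂ h.lastIdx ≫ (t - t') = 0 := by rw [Preadditive.comp_sub, htt, sub_self]
  rw [← sub_eq_zero]
  obtain ⟨s, ht⟩ := Triangle.yoneda_exact₃ _ (h.triangle_distinguished h.lastIdx) (t - t') h0
  have hs0 : s = 0 := h.shift_fil_hom_eq_zero hs hX h.lastIdx.castSucc
    (fun i _ => by linarith [h.phi_lastIdx_le i]) s
  rw [ht, hs0]
  exact comp_zero

lemma mor₂_lastIdx_ne_zero (hs : IsStabCond σ) (h : HNFiltration σ.P E) :
    h.mor₂ h.lastIdx ≠ 0 := fun h0 =>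
  h.A_ne h.lastIdx <| (IsZero.iff_id_eq_zero _).2 <|
    h.mor₂_lastIdx_cancel hs (h.A_mem h.lastIdx) (by rw [h0, zero_comp, zero_comp])

lemma exists_mor₂_lastIdx_comp (hs : IsStabCond σ) (h : HNFiltration σ.P E) {X : C}
    (hX : X ∈ σ.P (h.phi h.lastIdx)) (v : h.Fil h.lastIdx.succ ⟶ X) :
    ∃ t : h.A h.lastIdx ⟶ X, v = h.mor₂ h.lastIdx ≫ t :=
  Triangle.yoneda_exact₂ _ (h.triangle_distinguished h.lastIdx) v <|
    h.fil_hom_eq_zero hs hX h.lastIdx.castSucc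
      (fun _ hi => h.phi_anti (Fin.castSucc_lt_castSucc_iff.1 hi)) _

lemma not_isZero (hs : IsStabCond σ) (h : HNFiltration σ.P E) : ¬ IsZero E := fun hE =>
  h.mor₂_lastIdx_ne_zero hs ((hE.of_iso h.topIso).eq_of_src _ _)

lemma phi_lastIdx_le_phi_lastIdx (hs : IsStabCond σ) (h₁ h₂ : HNFiltration σ.P E) :
    h₁.phi h₁.lastIdx ≤ h₂.phi h₂.lastIdx := by
  by_contra! hlt
  apply h₂.mor₂_lastIdx_ne_zero hs
  have h0 : h₁.topIso.hom ≫ h₂.topIso.inv ≫ h₂.mor₂ h₂.lastIdx = 0 :=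
    h₁.fil_hom_eq_zero hs (h₂.A_mem h₂.lastIdx) h₁.lastIdx.succ
      (fun i _ => hlt.trans_le (h₁.phi_lastIdx_le i)) _
  simpa using congrArg (h₂.topIso.hom ≫ h₁.topIso.inv ≫ ·) h0

lemma phi_lastIdx_eq (hs : IsStabCond σ) (h₁ h₂ : HNFiltration σ.P E) :
    h₁.phi h₁.lastIdx = h₂.phi h₂.lastIdx :=
  le_antisymm (phi_lastIdx_le_phi_lastIdx hs h₁ h₂) (phi_lastIdx_le_phi_lastIdx hs h₂ h₁)

/-- `mor₂ lastIdx : Fil n → A (n - 1)` is universal among maps from `E` to semistable objects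
of the minimal phase, so the last factor is determined by `E`. -/
lemma exists_A_lastIdx_iso (hs : IsStabCond σ) (h₁ h₂ : HNFiltration σ.P E) :
    ∃ e : h₁.A h₁.lastIdx ≅ h₂.A h₂.lastIdx,
      h₁.mor₂ h₁.lastIdx ≫ e.hom = (h₁.topIso ≪≫ h₂.topIso.symm).hom ≫ h₂.mor₂ h₂.lastIdx := by
  have hφ := phi_lastIdx_eq hs h₁ h₂
  have hA₁ := h₁.A_mem h₁.lastIdx
  have hA₂ := h₂.A_mem h₂.lastIdx
  set ε := h₁.topIso ≪≫ h₂.topIso.symm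
  obtain ⟨f, hf⟩ := h₁.exists_mor₂_lastIdx_comp hs (hφ ▸ hA₂) (ε.hom ≫ h₂.mor₂ h₂.lastIdx)
  obtain ⟨f', hf'⟩ := h₂.exists_mor₂_lastIdx_comp hs (hφ ▸ hA₁) (ε.inv ≫ h₁.mor₂ h₁.lastIdx)
  refine ⟨⟨f, f', ?_, ?_⟩, hf.symm⟩
  · refine h₁.mor₂_lastIdx_cancel hs hA₁ ?_
    rw [← Category.assoc, ← hf, Category.assoc, ← hf', Iso.hom_inv_id_assoc, Category.comp_id]
  · refine h₂.mor₂_lastIdx_cancel hs hA₂ ?_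
    rw [← Category.assoc, ← hf', Category.assoc, ← hf, Iso.inv_hom_id_assoc, Category.comp_id]

lemma nonempty_fil_lastIdx_castSucc_iso (hs : IsStabCond σ) (h₁ h₂ : HNFiltration σ.P E) :
    Nonempty (h₁.Fil h₁.lastIdx.castSucc ≅ h₂.Fil h₂.lastIdx.castSucc) := by
  obtain ⟨e, he⟩ := exists_A_lastIdx_iso hs h₁ h₂
  let e' := isoTriangleOfIso₁₂ _ _ (rot_of_distTriang _ (h₁.triangle_distinguished _))
    (rot_of_distTriang _ (h₂.triangle_distinguished _)) _ e he
  exact ⟨(shiftFunctor C (1 : ℤ)).preimageIso (Triangle.π₃.mapIso e')⟩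

lemma n_eq_one_iff (hs : IsStabCond σ) (h : HNFiltration σ.P E) :
    h.n = 1 ↔ IsZero (h.Fil h.lastIdx.castSucc) := by
  refine ⟨fun hn => ?_, fun hz => ?_⟩
  · convert h.fil_zero
    ext
    simp only [lastIdx, Fin.val_castSucc, Fin.val_zero]
    omega
  · by_contra hn
    exact (h.restrict (by have := h.npos; omega)).not_isZero hs hz

theorem invariants_eq (hs : IsStabCond σ) (h₁ h₂ : HNFiltration σ.P E) :
    h₁.phi ⟨0, h₁.npos⟩ = h₂.phi ⟨0, h₂.npos⟩ ∧ h₁.phi h₁.lastIdx = h₂.phi h₂.lastIdx ∧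
      ∑ i, ‖σ.Z (h₁.A i)‖ = ∑ i, ‖σ.Z (h₂.A i)‖ := by
  obtain ⟨N, hN⟩ : ∃ N, h₁.n = N := ⟨_, rfl⟩
  induction N generalizing E with
  | zero => exact absurd hN h₁.npos.ne'
  | succ N ih =>
    have hbot := phi_lastIdx_eq hs h₁ h₂
    obtain ⟨e, -⟩ := exists_A_lastIdx_iso hs h₁ h₂
    obtain ⟨e'⟩ := nonempty_fil_lastIdx_castSucc_iso hs h₁ h₂
    have hlast : ‖σ.Z (h₁.A h₁.lastIdx)‖ = ‖σ.Z (h₂.A h₂.lastIdx)‖ := by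
      rw [AdditiveOnTriangles.congr_iso hs.zadd e]
    have hone : h₁.n = 1 ↔ h₂.n = 1 := by
      rw [n_eq_one_iff hs, n_eq_one_iff hs]
      exact ⟨(·.of_iso e'.symm), (·.of_iso e')⟩
    by_cases hn : h₁.n = 1
    · rw [h₁.zero_eq_lastIdx_of_n_eq_one hn, h₂.zero_eq_lastIdx_of_n_eq_one (hone.1 hn),
        h₁.sum_A_eq_of_n_eq_one hn (‖σ.Z ·‖), h₂.sum_A_eq_of_n_eq_one (hone.1 hn) (‖σ.Z ·‖)]
      exact ⟨hbot, hbot, hlast⟩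
    · have hn₁ : 2 ≤ h₁.n := by have := h₁.npos; omega
      have hn₂ : 2 ≤ h₂.n := by have := h₂.npos; have := hone.not.1 hn; omega
      obtain ⟨htop, -, hsum⟩ := ih (h₁.restrict hn₁) ((h₂.restrict hn₂).changeTarget e'.symm)
        (by simp only [restrict]; omega)
      rw [h₁.sum_A_eq_add_lastIdx hn₁ (‖σ.Z ·‖), h₂.sum_A_eq_add_lastIdx hn₂ (‖σ.Z ·‖)]
      exact ⟨htop, hbot, congrArg₂ (· + ·) hsum hlast⟩

end Stability

end HNFiltration

section Pushforward

variable {C : Type u₂} [Category.{v₂} C] [Preadditive C] [HasZeroObject C] [HasShift C ℤ]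
  [∀ n : ℤ, (shiftFunctor C n).Additive] [Pretriangulated C]
  {D : Type u} [Category.{v} D] [Preadditive D] [HasZeroObject D] [HasShift D ℤ]
  [∀ n : ℤ, (shiftFunctor D n).Additive] [Pretriangulated D]
  (p : C ⥤ D) [p.CommShift ℤ] [p.IsTriangulated]

def HNFiltration.map (hp : ∀ X : C, IsZero (p.obj X) → IsZero X) {P : ℝ → Set D} {E : C}
    (h : HNFiltration (fun φ => {X | p.obj X ∈ P φ}) E) : HNFiltration P (p.obj E) where
  n := h.n
  npos := h.npos
  Fil i := p.obj (h.Fil i)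
  A i := p.obj (h.A i)
  phi := h.phi
  fil_zero := p.map_isZero h.fil_zero
  fil_last := ⟨p.mapIso h.fil_last.some⟩
  A_mem := h.A_mem
  A_ne i hz := h.A_ne i (hp _ hz)
  phi_anti := h.phi_anti
  tri i := ⟨_, _, _, p.map_distinguished _ (h.triangle_distinguished i)⟩

variable {p} {σ : PreStab D} {E : C}

lemma phiPlus_pushforward (hp : ∀ X : C, IsZero (p.obj X) → IsZero X) (hσ : IsStabCond σ)
    (h : HNFiltration (pushforward p σ).P E) :
    phiPlus (pushforward p σ) E = phiPlus σ (p.obj E) :=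
  csSup_eq_of_subset_of_subsingleton (fun _ ⟨h', hx⟩ => ⟨h'.map p hp, hx⟩) ⟨_, h, rfl⟩
    fun _ ⟨h₁, hx₁⟩ _ ⟨h₂, hx₂⟩ => hx₁ ▸ hx₂ ▸ (h₁.invariants_eq hσ h₂).1

lemma phiMinus_pushforward (hp : ∀ X : C, IsZero (p.obj X) → IsZero X) (hσ : IsStabCond σ)
    (h : HNFiltration (pushforward p σ).P E) :
    phiMinus (pushforward p σ) E = phiMinus σ (p.obj E) :=
  csSup_eq_of_subset_of_subsingleton (fun _ ⟨h', hx⟩ => ⟨h'.map p hp, hx⟩) ⟨_, h, rfl⟩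
    fun _ ⟨h₁, hx₁⟩ _ ⟨h₂, hx₂⟩ => hx₁ ▸ hx₂ ▸ (h₁.invariants_eq hσ h₂).2.1

lemma mass_pushforward (hp : ∀ X : C, IsZero (p.obj X) → IsZero X) (hσ : IsStabCond σ)
    (h : HNFiltration (pushforward p σ).P E) :
    mass (pushforward p σ) E = mass σ (p.obj E) :=
  csSup_eq_of_subset_of_subsingleton (fun _ ⟨h', hx⟩ => ⟨h'.map p hp, hx⟩) ⟨_, h, rfl⟩
    fun _ ⟨h₁, hx₁⟩ _ ⟨h₂, hx₂⟩ => hx₁ ▸ hx₂ ▸ (h₁.invariants_eq hσ h₂).2.2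

theorem stabDist_pushforward_le (hp : ∀ X : C, IsZero (p.obj X) → IsZero X) {τ : PreStab D}
    (hσ : IsStabCond σ) (hτ : IsStabCond τ)
    (hσp : ∀ E : C, ¬ IsZero E → Nonempty (HNFiltration (pushforward p σ).P E))
    (hτp : ∀ E : C, ¬ IsZero E → Nonempty (HNFiltration (pushforward p τ).P E)) :
    stabDist (pushforward p σ) (pushforward p τ) ≤ stabDist σ τ := by
  refine iSup_le fun E => ?_
  obtain ⟨hσE⟩ := hσp E.1 E.2
  obtain ⟨hτE⟩ := hτp E.1 E.2
  rw [phiMinus_pushforward hp hσ hσE, phiMinus_pushforward hp hτ hτE,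
    phiPlus_pushforward hp hσ hσE, phiPlus_pushforward hp hτ hτE,
    mass_pushforward hp hσ hσE, mass_pushforward hp hτ hτE]
  exact le_iSup_of_le (ι := {E : D // ¬ IsZero E}) ⟨p.obj E.1, fun hz => E.2 (hp _ hz)⟩ le_rfl

end Pushforward

/-- In the Galois setup, if the pullback pairs `p^* σ'` and `p^* τ'`
of `σ', τ' ∈ Stab(T)` are locally finite stability conditions on `T_L`, then
`d(p^* σ', p^* τ') ≤ d(σ', τ')` in `[0, ∞]`. -/
theorem statement_1
    {C₁ : Type u} [Category.{v} C₁] [Preadditive C₁] [HasZeroObject C₁] [HasShift C₁ ℤ]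
    [∀ n : ℤ, (shiftFunctor C₁ n).Additive] [Pretriangulated C₁] [HasFiniteBiproducts C₁]
    {C₂ : Type u₂} [Category.{v₂} C₂] [Preadditive C₂] [HasZeroObject C₂] [HasShift C₂ ℤ]
    [∀ n : ℤ, (shiftFunctor C₂ n).Additive] [Pretriangulated C₂] [HasFiniteBiproducts C₂]
    {G : Type} [Group G] [Fintype G]
    (pstar : C₁ ⥤ C₂) [pstar.CommShift ℤ] [pstar.IsTriangulated]
    (plow : C₂ ⥤ C₁) [plow.CommShift ℤ] [plow.IsTriangulated]
    (gst : G → C₂ ⥤ C₂) [∀ g : G, (gst g).CommShift ℤ] [∀ g : G, (gst g).IsTriangulated]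
    [∀ g : G, (gst g).IsEquivalence]
    (actOne : gst 1 ≅ 𝟭 C₂) (actMul : ∀ g h : G, gst h ⋙ gst g ≅ gst (g * h))
    (pIso : ∀ g : G, pstar ≅ pstar ⋙ gst g)
    (pIsoCocycle : ∀ (g h : G) (E : C₁), (pIso (g * h)).hom.app E =
      (pIso g).hom.app E ≫ (gst g).map ((pIso h).hom.app E) ≫ (actMul g h).hom.app (pstar.obj E))
    (qIso : ∀ g : G, gst g ⋙ plow ≅ plow)
    (ppIso : ∀ E : C₁, plow.obj (pstar.obj E) ≅ ⨁ (fun _ : G => E))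
    (ppNat : ∀ {E F : C₁} (f : E ⟶ F),
      plow.map (pstar.map f) ≫ (ppIso F).hom = (ppIso E).hom ≫ biproduct.map (fun _ => f))
    (qpIso : ∀ X : C₂, pstar.obj (plow.obj X) ≅ ⨁ (fun g : G => (gst g).obj X))
    (qpNat : ∀ {X Y : C₂} (f : X ⟶ Y),
      pstar.map (plow.map f) ≫ (qpIso Y).hom = (qpIso X).hom ≫ biproduct.map (fun g => (gst g).map f))
    (σ' τ' : Stab C₁)
    (hσ : IsStabilityCondition (pushforward plow σ'.1))
    (hτ : IsStabilityCondition (pushforward plow τ'.1)) :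
    stabDist (pushforward plow σ'.1) (pushforward plow τ'.1) ≤ stabDist σ'.1 τ'.1 := by
  have hplow : ∀ X : C₂, IsZero (plow.obj X) → IsZero X := fun X hX =>
    (((pstar.map_isZero hX).of_iso (qpIso X).symm).of_mono (biproduct.ι _ 1)).of_iso
      (actOne.app X).symm
  exact stabDist_pushforward_le hplow σ'.2.1 τ'.2.1 hσ.1.sc4 hτ.1.sc4

end StabilityPaper
end
end

section
/- In the Galois setup, assume that for every σ′ ∈ Stab(T) the pullback pair p^*σ′ is a locally finite stability condition on T_L. Then the map p^* : Stab(T) → Stab(T_L) is injective and the map p_* : Stab(T_L)_p → Stab(T) is surjective. -/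
open CategoryTheory Limits Pretriangulated ENNReal

noncomputable section

namespace StabilityPaper

universe v u v₂ u₂ v₃ u₃

/-!
Since `p_* p^* E ≅ E^{⊕d}`, pulling back and then pushing forward a stability condition on `T`
leaves its slicing unchanged and multiplies its central charge by `d`. For the charge this is
additivity on triangles. For the slicing it says that `E^{⊕d}` is semistable of phase `φ` iff
`E` is: a direct summand `E` of an object of `P(φ)` has all its Harder–Narasimhan phases equal
to `φ`, since a nonzero map from the first HN factor into `E` and a nonzero map from `E` to
the last HN factor survive composition with the splitting maps. So `p^*` is injective, and
every `σ'` equals `p_* (p^* (σ' / d))`.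
-/
section Biproducts

variable {C : Type u} [Category.{v} C] [Preadditive C] [HasFiniteBiproducts C]

def biproductFinSuccIso [HasBinaryBiproducts C] {n : ℕ} (f : Fin (n + 1) → C) :
    ⨁ f ≅ f 0 ⊞ ⨁ (fun i : Fin n => f i.succ) where
  hom := biprod.lift (biproduct.π f 0) (biproduct.lift fun i => biproduct.π f i.succ)
  inv := biprod.desc (biproduct.ι f 0) (biproduct.desc fun i => biproduct.ι f i.succ)
  hom_inv_id := by
    rw [biprod.lift_desc, biproduct.lift_desc, ← biproduct.total, Fin.sum_univ_succ]
  inv_hom_id := by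
    ext i <;>
      simp [biproduct.ι_π_ne _ (Fin.succ_ne_zero _).symm, biproduct.ι_π, Fin.succ_inj,
        Fin.succ_ne_zero]

lemma isZero_biproduct_of_isEmpty {ι : Type*} [Finite ι] [IsEmpty ι] (f : ι → C) :
    IsZero (⨁ f) :=
  (IsZero.iff_id_eq_zero _).mpr (biproduct.hom_ext _ _ isEmptyElim)

def biproductEquivFinIso {ι : Type*} [Fintype ι] (f : ι → C) :
    ⨁ f ≅ ⨁ (f ∘ (Fintype.equivFin ι).symm) :=
  biproduct.whiskerEquiv (Fintype.equivFin ι) fun i => eqToIso (by simp)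

end Biproducts

lemma shift_one_hom_eq_zero {C : Type u} [Category.{v} C] [HasZeroMorphisms C] [HasShift C ℤ]
    {X Y : C} (h : ∀ w : X ⟶ Y⟦(-1 : ℤ)⟧, w = 0) (v : X⟦(1 : ℤ)⟧ ⟶ Y) : v = 0 := by
  let adj := (shiftEquiv C (1 : ℤ)).toAdjunction
  apply (adj.homEquiv X Y).injective
  exact (h _).trans (h _).symm

namespace PreStab

variable {C : Type u}

def scaleCharge (c : ℝ) (σ : PreStab C) : PreStab C where
  Z E := c * σ.Z E
  P := σ.P

@[simp]
lemma scaleCharge_one (σ : PreStab C) : σ.scaleCharge 1 = σ := by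
  simp [scaleCharge]

@[simp]
lemma scaleCharge_scaleCharge (a b : ℝ) (σ : PreStab C) :
    (σ.scaleCharge a).scaleCharge b = σ.scaleCharge (b * a) := by
  simp [scaleCharge, mul_assoc]

lemma scaleCharge_injective {c : ℝ} (hc : c ≠ 0) :
    Function.Injective (scaleCharge (C := C) c) := by
  rintro ⟨Z, P⟩ ⟨Z', P'⟩ h
  simp only [scaleCharge, mk.injEq] at h
  obtain ⟨hZ, rfl⟩ := h
  congr
  funext E
  exact mul_left_cancel₀ (Complex.ofReal_ne_zero.mpr hc) (congrFun hZ E)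

end PreStab

section Pretriangulated

open ZeroObject

variable {C : Type u} [Category.{v} C] [Preadditive C] [HasZeroObject C] [HasShift C ℤ]
  [∀ n : ℤ, (shiftFunctor C n).Additive] [Pretriangulated C]

section Additive

variable {Z : C → ℂ}

namespace AdditiveOnTriangles

lemma map_isZero (hZ : AdditiveOnTriangles Z) {X : C} (hX : IsZero X) : Z X = 0 := by
  have hT : Triangle.mk (𝟙 X) (0 : X ⟶ X) 0 ∈ distTriang C :=
    (Triangle.distinguished_iff_of_isZero₃ _ hX).mpr (inferInstanceAs (IsIso (𝟙 X)))
  simpa using hZ _ hT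

lemma map_iso (hZ : AdditiveOnTriangles Z) {X Y : C} (e : X ≅ Y) : Z X = Z Y := by
  have hT : Triangle.mk e.hom (0 : Y ⟶ 0) 0 ∈ distTriang C :=
    (Triangle.distinguished_iff_of_isZero₃ _ (isZero_zero C)).mpr
      (inferInstanceAs (IsIso e.hom))
  simpa [hZ.map_isZero (isZero_zero C)] using (hZ _ hT).symm

lemma map_biprod (hZ : AdditiveOnTriangles Z) (X Y : C) : Z (X ⊞ Y) = Z X + Z Y :=
  hZ _ (binaryBiproductTriangle_distinguished X Y)

lemma map_biproduct [HasFiniteBiproducts C] (hZ : AdditiveOnTriangles Z) {ι : Type*}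
    [Fintype ι] (f : ι → C) : Z (⨁ f) = ∑ i, Z (f i) := by
  suffices hfin : ∀ (n : ℕ) (f : Fin n → C), Z (⨁ f) = ∑ i, Z (f i) by
    rw [hZ.map_iso (biproductEquivFinIso f), hfin]
    exact Equiv.sum_comp (Fintype.equivFin ι).symm (fun i => Z (f i))
  intro n
  induction n with
  | zero => exact fun f => by simp [hZ.map_isZero (isZero_biproduct_of_isEmpty f)]
  | succ n ih =>
    intro f
    rw [hZ.map_iso (biproductFinSuccIso f), hZ.map_biprod, ih, Fin.sum_univ_succ]

lemma map_biproduct_const [HasFiniteBiproducts C] (hZ : AdditiveOnTriangles Z) (ι : Type*)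
    [Fintype ι] (X : C) : Z (⨁ fun _ : ι => X) = Fintype.card ι * Z X := by
  simp [hZ.map_biproduct]

end AdditiveOnTriangles

end Additive

lemma IsSlicing.biproduct_mem [HasFiniteBiproducts C] {P : ℝ → Set C} (hP : IsSlicing P)
    {φ : ℝ} {ι : Type*} [Fintype ι] {f : ι → C} (hf : ∀ i, f i ∈ P φ) : (⨁ f) ∈ P φ := by
  suffices hfin : ∀ (n : ℕ) (f : Fin n → C), (∀ i, f i ∈ P φ) → (⨁ f) ∈ P φ from
    hP.iso_mem φ _ _ ⟨(biproductEquivFinIso f).symm⟩ (hfin _ _ fun i => hf _)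
  intro n
  induction n with
  | zero => exact fun f _ => hP.zero_mem φ _ (isZero_biproduct_of_isEmpty f)
  | succ n ih =>
    intro f hf
    exact hP.iso_mem φ _ _ ⟨(biproductFinSuccIso f).symm⟩
      (hP.sum_mem φ _ _ (hf 0) (ih _ fun i => hf i.succ))

variable {σ : PreStab C}

lemma IsStabCond.shift_neg_one_mem (hσ : IsStabCond σ) {X : C} {φ : ℝ} (hX : X ∈ σ.P φ) :
    X⟦(-1 : ℤ)⟧ ∈ σ.P (φ - 1) := by
  rw [← hσ.sc2, sub_add_cancel]
  exact hσ.slicing.iso_mem φ X _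
    ⟨((shiftFunctorCompIsoId C (-1 : ℤ) 1 (by omega)).app X).symm⟩ hX

namespace HNFiltration

variable (hσ : IsStabCond σ) {E : C} (h : HNFiltration σ.P E)

def first : Fin h.n := ⟨0, h.npos⟩

def last : Fin h.n := ⟨h.n - 1, Nat.sub_lt h.npos one_pos⟩

include hσ in
lemma fil_hom_eq_zero_of_lt_phi {X : C} {ψ : ℝ} (hX : X ∈ σ.P ψ) (k : ℕ) (hk : k ≤ h.n)
    (hψ : ∀ i : Fin h.n, (i : ℕ) < k → ψ < h.phi i)
    (u : h.Fil ⟨k, Nat.lt_succ_of_le hk⟩ ⟶ X) : u = 0 := by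
  induction k with
  | zero => exact (h.fil_zero.eq_of_src u 0 :)
  | succ k ih =>
    obtain ⟨f, g, m, hT⟩ := h.tri ⟨k, hk⟩
    obtain ⟨w, rfl⟩ := Triangle.yoneda_exact₂ _ hT u
      (ih (by omega) (fun i hi => hψ i (by omega)) (f ≫ u))
    rw [hσ.sc3 _ ψ (hψ ⟨k, hk⟩ k.lt_succ_self) _ (h.A_mem _) _ hX w]
    exact comp_zero

include hσ in
lemma exists_ne_zero_from_first_to_fil (k : ℕ) (hk : k < h.n) :
    ∃ c : h.A h.first ⟶ h.Fil ⟨k + 1, by omega⟩, c ≠ 0 := by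
  induction k with
  | zero =>
    obtain ⟨f, g, m, hT⟩ := h.tri h.first
    have : IsIso g := (Triangle.isZero₁_iff_isIso₂ _ hT).mp h.fil_zero
    refine ⟨(asIso g).inv, fun hc => h.A_ne h.first ?_⟩
    rw [IsZero.iff_id_eq_zero, ← (asIso g).inv_hom_id, hc]
    exact zero_comp
  | succ k ih =>
    obtain ⟨c, hc⟩ := ih (by omega)
    obtain ⟨f, g, m, hT⟩ := h.tri ⟨k + 1, hk⟩
    refine ⟨c ≫ f, fun hcf => hc ?_⟩
    obtain ⟨w, rfl⟩ := Triangle.coyoneda_exact₂ _ (inv_rot_of_distTriang _ hT) c hcf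
    have hphase : h.phi ⟨k + 1, hk⟩ - 1 < h.phi h.first := by
      have := h.phi_anti.antitone (show h.first ≤ ⟨k + 1, hk⟩ from Nat.zero_le _)
      linarith
    rw [hσ.sc3 _ _ hphase _ (h.A_mem _) _ (hσ.shift_neg_one_mem (h.A_mem _)) w]
    exact zero_comp

include hσ in
lemma exists_ne_zero_from_first : ∃ c : h.A h.first ⟶ E, c ≠ 0 := by
  obtain ⟨e⟩ := h.fil_last
  have hn := h.npos
  obtain ⟨c, hc⟩ := h.exists_ne_zero_from_first_to_fil hσ (h.n - 1) (by omega)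
  have hlast : (⟨h.n - 1 + 1, by omega⟩ : Fin (h.n + 1)) = Fin.last h.n := by
    ext; simp only [Fin.val_last]; omega
  refine ⟨c ≫ eqToHom (congrArg h.Fil hlast) ≫ e.hom, fun hce => hc ?_⟩
  simpa using hce =≫ e.inv

include hσ in
lemma exists_ne_zero_to_last : ∃ g : E ⟶ h.A h.last, g ≠ 0 := by
  obtain ⟨e⟩ := h.fil_last
  obtain ⟨f, g, m, hT⟩ := h.tri h.last
  have hn := h.npos
  have hlast : h.last.succ = Fin.last h.n :=
    Fin.ext (by simp only [last, Fin.succ_mk, Fin.val_last]; omega)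
  refine ⟨e.inv ≫ eqToHom (congrArg h.Fil hlast.symm) ≫ g, fun hg => ?_⟩
  have hg0 : g = 0 := by simpa using e.hom ≫= hg
  -- `𝟙 (A last)` would factor through `Fil (n-1)⟦1⟧`, whose maps to `A last` vanish by phases.
  obtain ⟨v, hv⟩ := Triangle.yoneda_exact₃ _ hT (𝟙 (h.A h.last))
    ((Category.comp_id g).trans hg0)
  have hv0 : v = 0 := shift_one_hom_eq_zero (fun w =>
    h.fil_hom_eq_zero_of_lt_phi hσ (hσ.shift_neg_one_mem (h.A_mem h.last)) (h.n - 1) (by omega)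
      (fun i hi => by
        have := h.phi_anti.antitone (show i ≤ h.last from Nat.le_of_lt hi)
        linarith) w) v
  exact h.A_ne h.last ((IsZero.iff_id_eq_zero _).mpr
    (hv.trans (by rw [hv0]; exact comp_zero)))

lemma nonempty_iso_A_first_of_n_eq_one (hn : h.n = 1) : Nonempty (h.A h.first ≅ E) := by
  obtain ⟨e⟩ := h.fil_last
  obtain ⟨f, g, m, hT⟩ := h.tri h.first
  have : IsIso g := (Triangle.isZero₁_iff_isIso₂ _ hT).mp h.fil_zero
  have hlast : h.first.succ = Fin.last h.n := Fin.ext (by simp [first, hn])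
  exact ⟨(asIso g).symm ≪≫ eqToIso (congrArg h.Fil hlast) ≪≫ e⟩

end HNFiltration

lemma IsStabCond.mem_of_retract (hσ : IsStabCond σ) {E D : C} (i : E ⟶ D) (p : D ⟶ E)
    (hip : i ≫ p = 𝟙 E) {φ : ℝ} (hD : D ∈ σ.P φ) : E ∈ σ.P φ := by
  by_cases hE : IsZero E
  · exact hσ.slicing.zero_mem φ E hE
  obtain ⟨h⟩ := hσ.sc4 E hE
  have hfirst : h.phi h.first ≤ φ := by
    obtain ⟨c, hc⟩ := h.exists_ne_zero_from_first hσ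
    by_contra! hlt
    exact hc (by simpa [hip] using hσ.sc3 _ _ hlt _ (h.A_mem _) _ hD (c ≫ i) =≫ p)
  have hlast : φ ≤ h.phi h.last := by
    obtain ⟨g, hg⟩ := h.exists_ne_zero_to_last hσ
    by_contra! hlt
    exact hg (by simpa [reassoc_of% hip] using i ≫= hσ.sc3 _ _ hlt _ hD _ (h.A_mem _) (p ≫ g))
  have hn : h.n = 1 := by
    by_contra hn
    have := h.phi_anti (show h.first < h.last by
      rw [Fin.lt_def]; simp only [HNFiltration.first, HNFiltration.last]; have := h.npos; omega)
    linarith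
  have hfl : h.first = h.last := Fin.ext (by simp [HNFiltration.first, HNFiltration.last, hn])
  obtain ⟨e⟩ := h.nonempty_iso_A_first_of_n_eq_one hn
  rw [← hfl] at hlast
  exact hσ.slicing.iso_mem φ _ _ ⟨e⟩ (le_antisymm hfirst hlast ▸ h.A_mem h.first)

lemma IsStabCond.biproduct_const_mem_iff [HasFiniteBiproducts C] (hσ : IsStabCond σ)
    {ι : Type*} [Fintype ι] [Nonempty ι] {E : C} {φ : ℝ} :
    (⨁ fun _ : ι => E) ∈ σ.P φ ↔ E ∈ σ.P φ := by
  let j : ι := Classical.arbitrary ι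
  refine ⟨hσ.mem_of_retract (biproduct.ι _ j) (biproduct.π _ j) (by simp), fun hE => ?_⟩
  exact hσ.slicing.biproduct_mem fun _ => hE

lemma IsStabilityCondition.scaleCharge (hσ : IsStabilityCondition σ) {c : ℝ} (hc : 0 < c) :
    IsStabilityCondition (σ.scaleCharge c) := by
  obtain ⟨⟨hsl, hZ, hsc1, hsc2, hsc3, hsc4⟩, hlf⟩ := hσ
  refine ⟨⟨hsl, fun T hT => ?_, fun φ E hE hE0 => ?_, hsc2, hsc3, hsc4⟩, hlf⟩
  · simp only [PreStab.scaleCharge, hZ T hT, mul_add]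
  · obtain ⟨m, hm, hmZ⟩ := hsc1 φ E hE hE0
    exact ⟨c * m, mul_pos hc hm, by simp only [PreStab.scaleCharge, hmZ]; push_cast; ring⟩

end Pretriangulated

lemma pushforward_pushforward_eq_scaleCharge
    {C₁ : Type u} [Category.{v} C₁] [Preadditive C₁] [HasZeroObject C₁] [HasShift C₁ ℤ]
    [∀ n : ℤ, (shiftFunctor C₁ n).Additive] [Pretriangulated C₁] [HasFiniteBiproducts C₁]
    {C₂ : Type u₂} [Category.{v₂} C₂] {ι : Type*} [Fintype ι] [Nonempty ι]
    {p : C₁ ⥤ C₂} {q : C₂ ⥤ C₁} (e : ∀ E : C₁, q.obj (p.obj E) ≅ ⨁ fun _ : ι => E)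
    {σ : PreStab C₁} (hσ : IsStabCond σ) :
    pushforward p (pushforward q σ) = σ.scaleCharge (Fintype.card ι) := by
  have hZ : AdditiveOnTriangles σ.Z := hσ.zadd
  simp only [pushforward, PreStab.scaleCharge, Complex.ofReal_natCast,
    hZ.map_iso (e _), hZ.map_biproduct_const]
  congr
  funext φ
  ext E
  exact ⟨fun hE => hσ.biproduct_const_mem_iff.mp (hσ.slicing.iso_mem φ _ _ ⟨e E⟩ hE),
    fun hE => hσ.slicing.iso_mem φ _ _ ⟨(e E).symm⟩ (hσ.biproduct_const_mem_iff.mpr hE)⟩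

/-- In the Galois setup, if the pullback pair `p^* σ'` is a locally
finite stability condition on `T_L` for every `σ' ∈ Stab(T)`, then
`p^* : Stab(T) → Stab(T_L)` is injective and `p_* : Stab(T_L)_p → Stab(T)` is
surjective. -/
theorem statement_4
    {C₁ : Type u} [Category.{v} C₁] [Preadditive C₁] [HasZeroObject C₁] [HasShift C₁ ℤ]
    [∀ n : ℤ, (shiftFunctor C₁ n).Additive] [Pretriangulated C₁] [HasFiniteBiproducts C₁]
    {C₂ : Type u₂} [Category.{v₂} C₂] [Preadditive C₂] [HasZeroObject C₂] [HasShift C₂ ℤ]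
    [∀ n : ℤ, (shiftFunctor C₂ n).Additive] [Pretriangulated C₂] [HasFiniteBiproducts C₂]
    {G : Type} [Group G] [Fintype G]
    (pstar : C₁ ⥤ C₂) [pstar.CommShift ℤ] [pstar.IsTriangulated]
    (plow : C₂ ⥤ C₁) [plow.CommShift ℤ] [plow.IsTriangulated]
    (gst : G → C₂ ⥤ C₂) [∀ g : G, (gst g).CommShift ℤ] [∀ g : G, (gst g).IsTriangulated]
    [∀ g : G, (gst g).IsEquivalence]
    (actOne : gst 1 ≅ 𝟭 C₂) (actMul : ∀ g h : G, gst h ⋙ gst g ≅ gst (g * h))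
    (pIso : ∀ g : G, pstar ≅ pstar ⋙ gst g)
    (pIsoCocycle : ∀ (g h : G) (E : C₁), (pIso (g * h)).hom.app E =
      (pIso g).hom.app E ≫ (gst g).map ((pIso h).hom.app E) ≫ (actMul g h).hom.app (pstar.obj E))
    (qIso : ∀ g : G, gst g ⋙ plow ≅ plow)
    (ppIso : ∀ E : C₁, plow.obj (pstar.obj E) ≅ ⨁ (fun _ : G => E))
    (ppNat : ∀ {E F : C₁} (f : E ⟶ F),
      plow.map (pstar.map f) ≫ (ppIso F).hom = (ppIso E).hom ≫ biproduct.map (fun _ => f))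
    (qpIso : ∀ X : C₂, pstar.obj (plow.obj X) ≅ ⨁ (fun g : G => (gst g).obj X))
    (qpNat : ∀ {X Y : C₂} (f : X ⟶ Y),
      pstar.map (plow.map f) ≫ (qpIso Y).hom = (qpIso X).hom ≫ biproduct.map (fun g => (gst g).map f))
    (hpb : ∀ σ' : Stab C₁, IsStabilityCondition (pushforward plow σ'.1)) :
    Function.Injective (fun σ' : Stab C₁ => (⟨pushforward plow σ'.1, hpb σ'⟩ : Stab C₂)) ∧
    (∀ σ' : Stab C₁, ∃ σ : Stab C₂, IsStabilityCondition (pushforward pstar σ.1) ∧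
      pushforward pstar σ.1 = σ'.1) := by
  have hd : (0 : ℝ) < Fintype.card G := by exact_mod_cast Fintype.card_pos
  have hcomp (σ' : Stab C₁) : pushforward pstar (pushforward plow σ'.1) =
      σ'.1.scaleCharge (Fintype.card G) :=
    pushforward_pushforward_eq_scaleCharge ppIso σ'.2.1
  refine ⟨fun σ₁ σ₂ h => Subtype.ext (PreStab.scaleCharge_injective hd.ne' ?_), fun σ' => ?_⟩
  · rw [← hcomp, ← hcomp]
    exact congrArg (fun σ : Stab C₂ => pushforward pstar σ.1) h
  · let τ : Stab C₁ := ⟨σ'.1.scaleCharge (Fintype.card G)⁻¹, σ'.2.scaleCharge (inv_pos.mpr hd)⟩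
    have hτ : pushforward pstar (pushforward plow τ.1) = σ'.1 := by
      rw [hcomp, PreStab.scaleCharge_scaleCharge, mul_inv_cancel₀ hd.ne',
        PreStab.scaleCharge_one]
    exact ⟨⟨_, hpb τ⟩, hτ ▸ σ'.2, hτ⟩

end StabilityPaper
end
end
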